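/- The goal-driven unfolding preserves all minimal configurations: if E is a minimal configuration of a safe Petri net N reaching the goal g, and the ignored-transition sets Useless(e) are computed by a correct reduction procedure (one returning only transitions occurring in no minimal firing sequence from the given marking), then E is entirely contained in the event set E_gd of the goal-driven unfolding. -/

import Mathlib

structure PetriNet (P T : Type) where
  pre : T → Set P
  post : T → Set P
  M0 : Set P

namespace PetriNet

variable {P T : Type}

/-- The marking obtained by firing `t` from `M`. -/
def fire (N : PetriNet P T) (M : Set P) (t : T) : Set P :=
  (M \ N.pre t) ∪ N.post t

/-- `w` is a firing sequence (each transition enabled in turn) from `M`. -/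
def enabledSeq (N : PetriNet P T) : Set P → List T → Prop
  | _, [] => True
  | M, t :: w => N.pre t ⊆ M ∧ enabledSeq N (N.fire M t) w

/-- The marking reached after firing the word `w` from `M`. -/
def exec (N : PetriNet P T) : Set P → List T → Set P
  | M, [] => M
  | M, t :: w => exec N (N.fire M t) w

/-- The list `M0, M1, …, Mn` of markings visited by the word `w` from `M`. -/
def visited (N : PetriNet P T) : Set P → List T → List (Set P)
  | M, [] => [M]
  | M, t :: w => M :: visited N (N.fire M t) w

/-- `w` is a minimal firing sequence from `M` to goal `g`: it is a firing
sequence reaching `g` and no feasible permutation of it is cycling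
(visits the same marking twice). -/
def MinimalFrom (N : PetriNet P T) (M g : Set P) (w : List T) : Prop :=
  N.enabledSeq M w ∧ N.exec M w = g ∧
    ∀ w' : List T, w'.Perm w → N.enabledSeq M w' → (N.visited M w').Nodup

/-- `M` is reachable from the initial marking. -/
def Reach (N : PetriNet P T) (M : Set P) : Prop :=
  ∃ w : List T, N.enabledSeq N.M0 w ∧ N.exec N.M0 w = M

/-- Safety condition of the paper. -/
def Safe (N : PetriNet P T) : Prop :=
  ∀ M : Set P, N.Reach M → ∀ t : T, N.pre t ⊆ M →
    ∀ p ∈ M ∩ N.fire M t, p ∈ N.pre t ∩ N.post t ∨ p ∉ N.pre t ∪ N.post t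

/-- The reduced net `N \ U`: same places and initial marking,
transitions restricted to `T \ U`. -/
def restrict (N : PetriNet P T) (U : Set T) : PetriNet P {t : T // t ∉ U} where
  pre := fun t => N.pre t.1
  post := fun t => N.post t.1
  M0 := N.M0

end PetriNet

/-- An abstract unfolding of a Petri net: events labelled by transitions,
with a strict causality relation with finite pasts. -/
structure Unf (P T Ev : Type) where
  net : PetriNet P T
  lab : Ev → T
  lt : Ev → Ev → Prop
  lt_trans : ∀ a b c : Ev, lt a b → lt b c → lt a c
  lt_irrefl : ∀ e : Ev, ¬ lt e e
  finite_past : ∀ e : Ev, {e' | lt e' e}.Finite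

namespace Unf

variable {P T Ev : Type}

/-- The causal past `⌈e⌉` of an event, including `e` itself. -/
def past (U : Unf P T Ev) (e : Ev) : Set Ev := {e' | U.lt e' e} ∪ {e}

/-- `l` is a linearization of the set of events `C`: an enumeration of `C`
without repetition such that `e_i < e_j` implies `i < j`. -/
def IsLin (U : Unf P T Ev) (l : List Ev) (C : Set Ev) : Prop :=
  l.Nodup ∧ (∀ x, x ∈ l ↔ x ∈ C) ∧
    ∀ i j : Fin l.length, U.lt (l.get i) (l.get j) → (i : ℕ) < j

/-- `C` is a minimal configuration to the goal `g`: a causally closed set of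
events, `C = K(σ)` for some minimal firing sequence `σ` from `M0` to `g`. -/
def IsMinConfig (U : Unf P T Ev) (g : Set P) (C : Set Ev) : Prop :=
  (∀ e ∈ C, ∀ e' : Ev, U.lt e' e → e' ∈ C) ∧
    ∃ l : List Ev, U.IsLin l C ∧
      U.net.MinimalFrom U.net.M0 g (l.map U.lab)

end Unf

/-!
Let `E` be a minimal configuration and `e ∈ E`. Since `⌈e⌉` is causally closed, a linearization
of `E` can be rearranged to list `⌈e⌉` first; this rearrangement is still feasible, so its tail,
the events of `E` outside `⌈e⌉`, is a minimal firing sequence from `mark ⌈e⌉` to `g`. By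
well-founded induction on `e` it follows that no event of `E` outside `⌈e⌉` has its label in
`Useless e`: if the reduction is invoked at `e`, the inherited ignored set avoids that minimal
sequence by induction, so correctness keeps its labels out of `Useless e`. Every `f ∈ E` lies
outside `⌈f'⌉` for its causal predecessors `f'`, so no event of `E` is ignored.
-/

namespace PetriNet

variable {P T : Type} (N : PetriNet P T)

theorem exec_append (M : Set P) (u v : List T) :
    N.exec M (u ++ v) = N.exec (N.exec M u) v := by
  induction u generalizing M with
  | nil => rfl
  | cons t u ih => exact ih _

theorem enabledSeq_append (M : Set P) (u v : List T) :
    N.enabledSeq M (u ++ v) ↔ N.enabledSeq M u ∧ N.enabledSeq (N.exec M u) v := by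
  induction u generalizing M with
  | nil => simp [enabledSeq, exec]
  | cons t u ih => simp only [List.cons_append, enabledSeq, exec, ih, and_assoc]

theorem visited_ne_nil (M : Set P) (w : List T) : N.visited M w ≠ [] := by
  cases w <;> simp [visited]

theorem visited_append (M : Set P) (u v : List T) :
    N.visited M (u ++ v) = (N.visited M u).dropLast ++ N.visited (N.exec M u) v := by
  induction u generalizing M with
  | nil => simp [visited, exec]
  | cons t u ih =>
    simp only [List.cons_append, visited, exec, ih,
      List.dropLast_cons_of_ne_nil (N.visited_ne_nil _ u)]

variable {N}

theorem MinimalFrom.perm {M g : Set P} {w w' : List T} (h : N.MinimalFrom M g w)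
    (hp : w'.Perm w) (hen : N.enabledSeq M w') (hexec : N.exec M w' = g) :
    N.MinimalFrom M g w' :=
  ⟨hen, hexec, fun w'' hp' hen' => h.2.2 w'' (hp'.trans hp) hen'⟩

theorem MinimalFrom.drop_prefix {M g : Set P} {u v : List T}
    (h : N.MinimalFrom M g (u ++ v)) : N.MinimalFrom (N.exec M u) g v := by
  obtain ⟨hen, hexec, hnodup⟩ := h
  have henu := ((N.enabledSeq_append M u v).1 hen).1
  refine ⟨((N.enabledSeq_append M u v).1 hen).2, (N.exec_append M u v) ▸ hexec, ?_⟩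
  intro w hp henw
  have := hnodup (u ++ w) (hp.append_left u) ((N.enabledSeq_append M u w).2 ⟨henu, henw⟩)
  rw [visited_append] at this
  exact (List.nodup_append.1 this).2.1

end PetriNet

namespace Unf

variable {P T Ev : Type} (U : Unf P T Ev)

theorem wellFounded_lt : WellFounded U.lt := by
  refine Subrelation.wf (r := InvImage (· < ·) fun e => {e' | U.lt e' e}.ncard) ?_
    (InvImage.wf _ Nat.lt_wfRel.wf)
  intro a b hab
  have hsub : {e' | U.lt e' a} ⊂ {e' | U.lt e' b} :=
    (Set.ssubset_iff_of_subset fun _ hx => U.lt_trans _ _ _ hx hab).2 ⟨a, hab, U.lt_irrefl a⟩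
  exact Set.ncard_lt_ncard hsub (U.finite_past b)

def IsDownClosed (S : Set Ev) : Prop := ∀ a ∈ S, ∀ b, U.lt b a → b ∈ S

variable {U}

theorem isDownClosed_past (e : Ev) : U.IsDownClosed (U.past e) := by
  rintro a (ha | rfl) b hba
  exacts [Or.inl (U.lt_trans _ _ _ hba ha), Or.inl hba]

theorem IsDownClosed.past_subset {E : Set Ev} (hE : U.IsDownClosed E) {e : Ev} (he : e ∈ E) :
    U.past e ⊆ E := by
  rintro x (hx | rfl)
  exacts [hE e he x hx, he]

theorem notMem_past_of_lt {f f' : Ev} (hlt : U.lt f' f) : f ∉ U.past f' := by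
  rintro (h | rfl)
  exacts [U.lt_irrefl f (U.lt_trans _ _ _ h hlt), U.lt_irrefl f hlt]

theorem isLin_iff_pairwise (l : List Ev) (C : Set Ev) :
    U.IsLin l C ↔ l.Nodup ∧ (∀ x, x ∈ l ↔ x ∈ C) ∧ l.Pairwise (fun a b => ¬ U.lt b a) := by
  refine and_congr_right fun _ => and_congr_right fun _ => ?_
  rw [List.pairwise_iff_get]
  refine ⟨fun h i j hij hlt => absurd (h j i hlt) (by omega), fun h i j hlt => ?_⟩
  rcases lt_trichotomy (i : ℕ) j with hij | hij | hij
  · exact hij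
  · exact absurd (Fin.ext hij ▸ hlt) (U.lt_irrefl _)
  · exact absurd hlt (h j i hij)

theorem IsLin.filter_mem {l : List Ev} {C S : Set Ev} [DecidablePred (· ∈ S)]
    (h : U.IsLin l C) (hS : S ⊆ C) : U.IsLin (l.filter (· ∈ S)) S := by
  obtain ⟨hnd, hmem, hpw⟩ := (isLin_iff_pairwise l C).1 h
  refine (isLin_iff_pairwise _ _).2 ⟨hnd.filter _, fun x => ?_, hpw.filter _⟩
  simpa [hmem] using @hS x

theorem IsLin.filter_append_filter_not {l : List Ev} {C S : Set Ev} [DecidablePred (· ∈ S)]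
    (h : U.IsLin l C) (hS : U.IsDownClosed S) :
    U.IsLin (l.filter (· ∈ S) ++ l.filter (· ∉ S)) C := by
  obtain ⟨hnd, hmem, hpw⟩ := (isLin_iff_pairwise l C).1 h
  have hperm : (l.filter (· ∈ S) ++ l.filter (· ∉ S)).Perm l := by
    simpa using List.filter_append_perm (fun x => decide (x ∈ S)) l
  refine (isLin_iff_pairwise _ _).2 ⟨hperm.nodup_iff.2 hnd, fun x => hperm.mem_iff.trans (hmem x),
    List.pairwise_append.2 ⟨hpw.filter _, hpw.filter _, ?_⟩⟩
  intro a ha b hb hba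
  simp only [List.mem_filter, decide_eq_true_eq, decide_not, Bool.not_eq_eq_eq_not,
    Bool.not_true, decide_eq_false_iff_not] at ha hb
  exact hb.2 (hS a ha.2 b hba)

theorem exists_minimalFrom_mark {mark : Set Ev → Set P} {g : Set P}
    (hmark : ∀ (C : Set Ev) (l : List Ev), U.IsLin l C →
      U.net.enabledSeq U.net.M0 (l.map U.lab) → U.net.exec U.net.M0 (l.map U.lab) = mark C)
    (hfeas : ∀ (C : Set Ev) (l l' : List Ev), U.IsLin l C → U.IsLin l' C →
      U.net.enabledSeq U.net.M0 (l.map U.lab) → U.net.enabledSeq U.net.M0 (l'.map U.lab))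
    {E S : Set Ev} {l : List Ev} (hlin : U.IsLin l E)
    (hmin : U.net.MinimalFrom U.net.M0 g (l.map U.lab)) (hS : U.IsDownClosed S) (hSE : S ⊆ E) :
    ∃ B : List Ev, (∀ x, x ∈ B ↔ x ∈ E ∧ x ∉ S) ∧
      U.net.MinimalFrom (mark S) g (B.map U.lab) := by
  classical
  set A := l.filter (· ∈ S)
  set B := l.filter (· ∉ S)
  have hlinAB := hlin.filter_append_filter_not hS
  have henAB : U.net.enabledSeq U.net.M0 (A.map U.lab ++ B.map U.lab) := by
    simpa [A, B] using hfeas E l _ hlin hlinAB hmin.1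
  have hperm : (A ++ B).Perm l := by
    simpa [A, B] using List.filter_append_perm (fun x => decide (x ∈ S)) l
  have hminAB : U.net.MinimalFrom U.net.M0 g (A.map U.lab ++ B.map U.lab) := by
    refine hmin.perm (by simpa using hperm.map U.lab) henAB ?_
    rw [← List.map_append, hmark E _ hlinAB (by rw [List.map_append]; exact henAB),
      ← hmark E l hlin hmin.1]
    exact hmin.2.1
  refine ⟨B, fun x => ?_, ?_⟩
  · simp [B, hlin.2.1 x]
  · have hA := hmark S A (hlin.filter_mem hSE) ((U.net.enabledSeq_append _ _ _).1 henAB).1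
    simpa only [hA] using hminAB.drop_prefix

theorem lab_notMem_useless {g : Set P} {E' : Set Ev} {mark : Set Ev → Set P}
    {uselessTrs : Set P → Set T → Set T} {Useless : Ev → Set T}
    (hU1 : ∀ e ∉ E', Useless e = ⋃ e' ∈ {e' : Ev | U.lt e' e}, Useless e')
    (hU2 : ∀ e ∈ E', Useless e = uselessTrs (mark (U.past e))
      (⋃ e' ∈ {e' : Ev | U.lt e' e}, Useless e'))
    (hcorrect : ∀ (M : Set P) (I : Set T) (w : List T),
      U.net.MinimalFrom M g w → (∀ t ∈ w, t ∉ I) → ∀ t ∈ w, t ∉ uselessTrs M I)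
    {E : Set Ev} (hE : U.IsDownClosed E)
    (hrest : ∀ e ∈ E, ∃ B : List Ev, (∀ x, x ∈ B ↔ x ∈ E ∧ x ∉ U.past e) ∧
      U.net.MinimalFrom (mark (U.past e)) g (B.map U.lab))
    {e f : Ev} (he : e ∈ E) (hf : f ∈ E) (hfe : f ∉ U.past e) : U.lab f ∉ Useless e := by
  induction e using U.wellFounded_lt.induction generalizing f with
  | _ e ih =>
  have hinherited : ∀ f ∈ E, f ∉ U.past e →
      U.lab f ∉ ⋃ e' ∈ {e' : Ev | U.lt e' e}, Useless e' := by
    intro f hf hfe hmem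
    obtain ⟨e', hlt, hmem⟩ := Set.mem_iUnion₂.1 hmem
    exact ih e' hlt (hE e he e' hlt) hf
      (fun h => hfe ((isDownClosed_past e).past_subset (Or.inl hlt) h)) hmem
  by_cases heE' : e ∈ E'
  · rw [hU2 e heE']
    obtain ⟨B, hB, hminB⟩ := hrest e he
    refine hcorrect _ _ _ hminB ?_ _ (List.mem_map_of_mem ((hB f).2 ⟨hf, hfe⟩))
    rintro _ hb
    obtain ⟨b, hbB, rfl⟩ := List.mem_map.1 hb
    exact hinherited b ((hB b).1 hbB).1 ((hB b).1 hbB).2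
  · rw [hU1 e heE']
    exact hinherited f hf hfe

end Unf

theorem stmt_14_general {P T Ev : Type} (U : Unf P T Ev) (g : Set P)
    (E' : Set Ev) (mark : Set Ev → Set P)
    (uselessTrs : Set P → Set T → Set T) (Useless : Ev → Set T)
    -- any feasible linearization of a set of events reaches its marking
    (hmark : ∀ (C : Set Ev) (l : List Ev), U.IsLin l C →
      U.net.enabledSeq U.net.M0 (l.map U.lab) →
      U.net.exec U.net.M0 (l.map U.lab) = mark C)
    -- in an unfolding, feasibility of linearizations of a given
    -- configuration does not depend on the chosen linearization
    (hfeas : ∀ (C : Set Ev) (l l' : List Ev), U.IsLin l C → U.IsLin l' C →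
      U.net.enabledSeq U.net.M0 (l.map U.lab) →
      U.net.enabledSeq U.net.M0 (l'.map U.lab))
    -- definition of `Useless`
    (hU1 : ∀ e ∉ E',
      Useless e = ⋃ e' ∈ {e' : Ev | U.lt e' e}, Useless e')
    (hU2 : ∀ e ∈ E',
      Useless e = uselessTrs (mark (U.past e))
        (⋃ e' ∈ {e' : Ev | U.lt e' e}, Useless e'))
    -- … and correctness: no transition of a minimal firing sequence (of the
    -- net already reduced by `I`) from `M` to `g` is declared useless
    (hcorrect : ∀ (M : Set P) (I : Set T) (w : List T),
      U.net.MinimalFrom M g w → (∀ t ∈ w, t ∉ I) →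
      ∀ t ∈ w, t ∉ uselessTrs M I)
    (E : Set Ev) (hE : U.IsMinConfig g E) :
    -- E ⊆ E_gd, where E_gd = {e | ⌈e⌉ ∩ E_Ignored = ∅} and
    -- E_Ignored = {f | ∃ f' < f, lab f ∈ Useless f'}
    E ⊆ {e : Ev | ∀ f ∈ U.past e,
      ¬ ∃ f' : Ev, U.lt f' f ∧ U.lab f ∈ Useless f'} := by
  obtain ⟨hcl : U.IsDownClosed E, l, hlin, hmin⟩ := hE
  rintro e he f hf ⟨f', hlt, hmem⟩
  have hfE : f ∈ E := hcl.past_subset he hf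
  have hrest := fun e' (he' : e' ∈ E) => Unf.exists_minimalFrom_mark hmark hfeas hlin hmin
    (Unf.isDownClosed_past e') (hcl.past_subset he')
  exact Unf.lab_notMem_useless hU1 hU2 hcorrect hcl hrest (hcl f hfE f' hlt) hfE
    (Unf.notMem_past_of_lt hlt) hmem

/-- Theorem 1 of the paper: the goal-driven unfolding
preserves all minimal configurations. If `Useless` is computed by a correct
reduction procedure (declaring useless only transitions occurring in no
minimal firing sequence from the given marking to `g`), then every minimal
configuration `E` of `N` reaching `g` is contained in the event set
`E_gd` of the goal-driven unfolding. -/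
theorem stmt_14 {P T Ev : Type} (U : Unf P T Ev) (g : Set P)
    (E' : Set Ev) (mark : Set Ev → Set P)
    (uselessTrs : Set P → Set T → Set T) (Useless : Ev → Set T)
    -- any feasible linearization of a set of events reaches its marking
    (hmark : ∀ (C : Set Ev) (l : List Ev), U.IsLin l C →
      U.net.enabledSeq U.net.M0 (l.map U.lab) →
      U.net.exec U.net.M0 (l.map U.lab) = mark C)
    -- in an unfolding, feasibility of linearizations of a given
    -- configuration does not depend on the chosen linearization
    (hfeas : ∀ (C : Set Ev) (l l' : List Ev), U.IsLin l C → U.IsLin l' C →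
      U.net.enabledSeq U.net.M0 (l.map U.lab) →
      U.net.enabledSeq U.net.M0 (l'.map U.lab))
    -- definition of `Useless`
    (hU1 : ∀ e ∉ E',
      Useless e = ⋃ e' ∈ {e' : Ev | U.lt e' e}, Useless e')
    (hU2 : ∀ e ∈ E',
      Useless e = uselessTrs (mark (U.past e))
        (⋃ e' ∈ {e' : Ev | U.lt e' e}, Useless e'))
    -- `useless^g_M(I)` contains `I` …
    (hI : ∀ (M : Set P) (I : Set T), I ⊆ uselessTrs M I)
    -- … and correctness: no transition of a minimal firing sequence (of the
    -- net already reduced by `I`) from `M` to `g` is declared useless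
    (hcorrect : ∀ (M : Set P) (I : Set T) (w : List T),
      U.net.MinimalFrom M g w → (∀ t ∈ w, t ∉ I) →
      ∀ t ∈ w, t ∉ uselessTrs M I)
    (E : Set Ev) (hE : U.IsMinConfig g E) :
    -- E ⊆ E_gd, where E_gd = {e | ⌈e⌉ ∩ E_Ignored = ∅} and
    -- E_Ignored = {f | ∃ f' < f, lab f ∈ Useless f'}
    E ⊆ {e : Ev | ∀ f ∈ U.past e,
      ¬ ∃ f' : Ev, U.lt f' f ∧ U.lab f ∈ Useless f'} :=
  stmt_14_general U g E' mark uselessTrs Useless hmark hfeas hU1 hU2 hcorrect E hE
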